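/- Let k ≥ 1 and let f: {0,1}^n → {0,1} be computed by a k-DNF formula: there is a finite family of terms (P_j, N_j) with P_j, N_j ⊆ [n] disjoint and |P_j| + |N_j| ≤ k, such that f(x) = 1 if and only if for some j, x_i = 1 for all i ∈ P_j and x_i = 0 for all i ∈ N_j. Then f is a k-self-bounding function. -/

import Mathlib

/-! On an input rejected by the DNF every coordinate drop is `≤ f x = 0`. On an accepted input
fix a satisfied term: changing a coordinate outside its at most `k` variables keeps the term
satisfied, so only those coordinates can drop the value, each by at most `1`. -/

noncomputable section

/-- A function `f : {0,1}^n → ℝ` is `a`-self-bounding. -/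
def SelfBounding (n : ℕ) (a : ℝ) (f : (Fin n → Bool) → ℝ) : Prop :=
  ∀ x : Fin n → Bool,
    (∀ i : Fin n,
      f x - min (f (Function.update x i false)) (f (Function.update x i true)) ≤ 1) ∧
    ∑ i : Fin n,
      (f x - min (f (Function.update x i false)) (f (Function.update x i true))) ≤ a * f x

section CoordDrop

variable {ι : Type*} [DecidableEq ι] {f : (ι → Bool) → ℝ}

def coordDrop (f : (ι → Bool) → ℝ) (x : ι → Bool) (i : ι) : ℝ :=
  f x - min (f (Function.update x i false)) (f (Function.update x i true))

theorem coordDrop_le_self (hf : ∀ y, 0 ≤ f y) (x : ι → Bool) (i : ι) :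
    coordDrop f x i ≤ f x :=
  sub_le_self _ (le_min (hf _) (hf _))

theorem coordDrop_eq_zero_of_update_eq {x : ι → Bool} {i : ι}
    (h : ∀ b, f (Function.update x i b) = f x) : coordDrop f x i = 0 := by
  simp only [coordDrop, h, min_self, sub_self]

theorem sum_coordDrop_le_card [Fintype ι] (hf : ∀ y, 0 ≤ f y) {x : ι → Bool} (hx : f x ≤ 1)
    {S : Finset ι} (hS : ∀ i ∉ S, ∀ b, f (Function.update x i b) = f x) :
    ∑ i, coordDrop f x i ≤ S.card := by
  rw [← Finset.sum_subset (Finset.subset_univ S) fun i _ hi =>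
    coordDrop_eq_zero_of_update_eq (hS i hi)]
  calc ∑ i ∈ S, coordDrop f x i ≤ ∑ _i ∈ S, (1 : ℝ) :=
        Finset.sum_le_sum fun i _ => (coordDrop_le_self hf x i).trans hx
    _ = S.card := by simp

end CoordDrop

theorem satisfies_term_update_of_notMem {ι : Type*} [DecidableEq ι] {t : Finset ι × Finset ι}
    {x : ι → Bool} (hx : (∀ i ∈ t.1, x i = true) ∧ (∀ i ∈ t.2, x i = false))
    {i : ι} (hi : i ∉ t.1 ∪ t.2) (b : Bool) :
    (∀ j ∈ t.1, Function.update x i b j = true) ∧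
      (∀ j ∈ t.2, Function.update x i b j = false) := by
  rw [Finset.mem_union, not_or] at hi
  refine ⟨fun j hj => ?_, fun j hj => ?_⟩
  · rw [Function.update_of_ne (ne_of_mem_of_not_mem hj hi.1)]
    exact hx.1 j hj
  · rw [Function.update_of_ne (ne_of_mem_of_not_mem hj hi.2)]
    exact hx.2 j hj

theorem kDNF_is_k_selfbounding_general (n k : ℕ)
    (T : Finset (Finset (Fin n) × Finset (Fin n)))
    (hT : ∀ t ∈ T, Disjoint t.1 t.2 ∧ t.1.card + t.2.card ≤ k)
    (f : (Fin n → Bool) → ℝ)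
    (hf01 : ∀ x, f x = 0 ∨ f x = 1)
    (hf : ∀ x, f x = 1 ↔
      ∃ t ∈ T, (∀ i ∈ t.1, x i = true) ∧ (∀ i ∈ t.2, x i = false)) :
    SelfBounding n (k : ℝ) f := by
  have hf0 : ∀ y, 0 ≤ f y := fun y => by rcases hf01 y with h | h <;> simp [h]
  have hf1 : ∀ y, f y ≤ 1 := fun y => by rcases hf01 y with h | h <;> simp [h]
  intro x
  refine ⟨fun i => (coordDrop_le_self hf0 x i).trans (hf1 x), ?_⟩
  change ∑ i, coordDrop f x i ≤ k * f x
  rcases hf01 x with hx | hx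
  · rw [hx, mul_zero]
    exact Finset.sum_nonpos fun i _ => hx ▸ coordDrop_le_self hf0 x i
  · obtain ⟨t, htT, hxt⟩ := (hf x).1 hx
    have hS : ∀ i ∉ t.1 ∪ t.2, ∀ b, f (Function.update x i b) = f x := fun i hi b => by
      rw [hx, hf]
      exact ⟨t, htT, satisfies_term_update_of_notMem hxt hi b⟩
    calc ∑ i, coordDrop f x i ≤ (t.1 ∪ t.2).card := sum_coordDrop_le_card hf0 (hf1 x) hS
      _ ≤ t.1.card + t.2.card := by exact_mod_cast Finset.card_union_le _ _
      _ ≤ k := by exact_mod_cast (hT t htT).2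
      _ = k * f x := by rw [hx, mul_one]

theorem kDNF_is_k_selfbounding (n k : ℕ) (hk : 1 ≤ k)
    (T : Finset (Finset (Fin n) × Finset (Fin n)))
    (hT : ∀ t ∈ T, Disjoint t.1 t.2 ∧ t.1.card + t.2.card ≤ k)
    (f : (Fin n → Bool) → ℝ)
    (hf01 : ∀ x, f x = 0 ∨ f x = 1)
    (hf : ∀ x, f x = 1 ↔
      ∃ t ∈ T, (∀ i ∈ t.1, x i = true) ∧ (∀ i ∈ t.2, x i = false)) :
    SelfBounding n (k : ℝ) f :=
  kDNF_is_k_selfbounding_general n k T hT f hf01 hf
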